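/- The LIP-additive Asplund distance d(f,g) = c₁ ⊖ c₂, with c₁ = inf{c : f ≤ c ⊕ g} and c₂ = sup{c : c ⊕ g ≤ f}, is invariant under LIP-addition of a constant to f: d(f ⊕ k, g) = d(f, g) for all constants k ∈ ]-∞, M[. -/

import Mathlib

noncomputable def lipAdd (M f g : ℝ) : ℝ := f + g - f * g / M

noncomputable def lipSub (M f g : ℝ) : ℝ := (f - g) / (1 - g / M)

/-- LIP-additive Asplund distance `d(f,g) = c₁ ⊖ c₂` with
`c₁ = inf{c : f ≤ c ⊕ g}` and `c₂ = sup{c : c ⊕ g ≤ f}`. -/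
noncomputable def aspDist (M : ℝ) {D : Type*} (f g : D → ℝ) : ℝ :=
  lipSub M (sInf {c : ℝ | ∀ x, f x ≤ lipAdd M c (g x)})
           (sSup {c : ℝ | ∀ x, lipAdd M c (g x) ≤ f x})

/-! Since `c ⊕ g = c (1 - g/M) + g` is increasing and affine in `c`, the two bounds `c₁`, `c₂`
are the maximum and minimum of `f ⊖ g`, so `d(f, g) = max (f ⊖ g) ⊖ min (f ⊖ g)`.
Adding `k` to `f` replaces `f ⊖ g` by `(f ⊖ g) ⊕ k`, and `c ↦ c ⊕ k` is an increasing affine map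
commuting with `max`, `min`, which `⊖` does not see: `(a ⊕ k) ⊖ (b ⊕ k) = a ⊖ b`. -/

lemma lipAdd_eq_mul_add (M c v : ℝ) : lipAdd M c v = c * (1 - v / M) + v := by
  unfold lipAdd; ring

lemma one_sub_div_pos {M v : ℝ} (hM : 0 < M) (hv : v < M) : 0 < 1 - v / M := by
  rw [sub_pos, div_lt_one hM]; exact hv

lemma le_lipAdd_iff_lipSub_le {M a c v : ℝ} (hM : 0 < M) (hv : v < M) :
    a ≤ lipAdd M c v ↔ lipSub M a v ≤ c := by
  rw [lipSub, div_le_iff₀ (one_sub_div_pos hM hv), lipAdd_eq_mul_add, ← sub_le_iff_le_add]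

lemma lipAdd_le_iff_le_lipSub {M a c v : ℝ} (hM : 0 < M) (hv : v < M) :
    lipAdd M c v ≤ a ↔ c ≤ lipSub M a v := by
  rw [lipSub, le_div_iff₀ (one_sub_div_pos hM hv), lipAdd_eq_mul_add, ← le_sub_iff_add_le]

lemma lipSub_lipAdd_lipAdd {M : ℝ} (hM : M ≠ 0) {k : ℝ} (hk : k ≠ M) (a b : ℝ) :
    lipSub M (lipAdd M a k) (lipAdd M b k) = lipSub M a b := by
  have hk' : 1 - k / M ≠ 0 := by
    rw [sub_ne_zero, ne_comm, Ne, div_eq_one_iff_eq hM]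
    exact hk
  have hnum : lipAdd M a k - lipAdd M b k = (1 - k / M) * (a - b) := by
    simp only [lipAdd_eq_mul_add]; ring
  have hden : 1 - lipAdd M b k / M = (1 - k / M) * (1 - b / M) := by
    simp only [lipAdd_eq_mul_add]; field_simp; ring
  rw [lipSub, lipSub, hnum, hden, mul_div_mul_left _ _ hk']

lemma lipSub_lipAdd_comm {M : ℝ} (hM : M ≠ 0) {b : ℝ} (hb : b ≠ M) (a k : ℝ) :
    lipSub M (lipAdd M a k) b = lipAdd M (lipSub M a b) k := by
  have hb' : M - b ≠ 0 := sub_ne_zero.mpr hb.symm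
  unfold lipSub lipAdd
  field_simp
  ring

lemma monotone_lipAdd_const {M k : ℝ} (hM : 0 < M) (hk : k < M) :
    Monotone (fun c => lipAdd M c k) := fun a b hab => by
  simp only [lipAdd_eq_mul_add]
  gcongr
  exact (one_sub_div_pos hM hk).le

lemma continuous_lipAdd_const (M k : ℝ) : Continuous (fun c => lipAdd M c k) := by
  unfold lipAdd; fun_prop

lemma aspDist_eq_lipSub_iSup_iInf {M : ℝ} (hM : 0 < M) {D : Type*} [Finite D] [Nonempty D]
    (f g : D → ℝ) (hg : ∀ x, g x < M) :
    aspDist M f g = lipSub M (⨆ x, lipSub M (f x) (g x)) (⨅ x, lipSub M (f x) (g x)) := by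
  have hinf : {c : ℝ | ∀ x, f x ≤ lipAdd M c (g x)} =
      upperBounds (Set.range fun x => lipSub M (f x) (g x)) := by
    ext c
    simp [upperBounds, le_lipAdd_iff_lipSub_le hM (hg _)]
  have hsup : {c : ℝ | ∀ x, lipAdd M c (g x) ≤ f x} =
      lowerBounds (Set.range fun x => lipSub M (f x) (g x)) := by
    ext c
    simp [lowerBounds, lipAdd_le_iff_le_lipSub hM (hg _)]
  rw [aspDist, hinf, hsup, csInf_upperBounds_range (Finite.bddAbove_range _),
    csSup_lowerBounds_range (Finite.bddBelow_range _)]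

theorem aspDist_lipAdd_const_general (M : ℝ) (hM : 0 < M) {D : Type*} [Fintype D]
    [Nonempty D] (f g : D → ℝ)
    (hg : ∀ x, 0 ≤ g x ∧ g x < M)
    (k : ℝ) (hk : k < M) :
    aspDist M (fun x => lipAdd M (f x) k) g = aspDist M f g := by
  have hgM : ∀ x, g x < M := fun x => (hg x).2
  rw [aspDist_eq_lipSub_iSup_iInf hM _ _ hgM, aspDist_eq_lipSub_iSup_iInf hM _ _ hgM]
  simp_rw [lipSub_lipAdd_comm hM.ne' (hgM _).ne]
  rw [← (monotone_lipAdd_const hM hk).map_ciSup_of_continuousAt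
      (continuous_lipAdd_const M k).continuousAt (Finite.bddAbove_range _),
    ← (monotone_lipAdd_const hM hk).map_ciInf_of_continuousAt
      (continuous_lipAdd_const M k).continuousAt (Finite.bddBelow_range _)]
  exact lipSub_lipAdd_lipAdd hM.ne' hk.ne _ _

/-- the LIP-additive Asplund distance is invariant under
LIP-addition of a constant `k ∈ ]-∞, M[` to `f`. -/
theorem aspDist_lipAdd_const (M : ℝ) (hM : 0 < M) {D : Type*} [Fintype D]
    [Nonempty D] (f g : D → ℝ)
    (hf : ∀ x, 0 ≤ f x ∧ f x < M) (hg : ∀ x, 0 ≤ g x ∧ g x < M)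
    (k : ℝ) (hk : k < M) :
    aspDist M (fun x => lipAdd M (f x) k) g = aspDist M f g :=
  aspDist_lipAdd_const_general M hM f g hg k hk
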